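/- arXiv:1905.12449 — 4 statements merged into one kernel-verified Lean document; each statement's English description precedes it below -/
import Mathlib

section
/- For fixed real numbers a and b, the ratio Γ(n+a)/Γ(n+b) is asymptotically equivalent to n^{a-b} as n → ∞, i.e., lim_{n→∞} [Γ(n+a)/Γ(n+b)] / n^{a-b} = 1. -/
/-!
Log-convexity of `Γ` (Hölder's inequality on Euler's integral), applied once between `x` and
`x + 1` and once between `x + a` and `x + a + 1`, gives Gautschi's inequality
`x Γ(x) (x + a)^(a - 1) ≤ Γ(x + a) ≤ Γ(x) x^a` for `0 < a < 1`, hence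
`Γ(x + a) ~ Γ(x) x^a` as `x → ∞`. The functional equation `Γ(x + 1) = x Γ(x)` and `x + a ~ x`
transport this equivalence along `a ↦ a ± 1`, so it holds for every real `a`; dividing the
equivalences for `a` and `b` gives the theorem.
-/

open Real Filter Asymptotics Topology

namespace Real

lemma rpow_mul_mul_rpow_of_add_eq_one {G y c d : ℝ} (hG : 0 ≤ G) (hy : 0 ≤ y) (hcd : c + d = 1) :
    G ^ c * (y * G) ^ d = G * y ^ d := by
  rw [mul_rpow hy hG, mul_left_comm, ← rpow_add' hG (by rw [hcd]; exact one_ne_zero), hcd,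
    rpow_one, mul_comm]

lemma Gamma_add_le_Gamma_mul_rpow {x a : ℝ} (hx : 0 < x) (ha₀ : 0 < a) (ha₁ : a < 1) :
    Gamma (x + a) ≤ Gamma x * x ^ a := by
  have hoelder := Gamma_mul_add_mul_le_rpow_Gamma_mul_rpow_Gamma hx (by linarith : 0 < x + 1)
    (by linarith : 0 < 1 - a) ha₀ (by ring)
  rwa [show (1 - a) * x + a * (x + 1) = x + a by ring, Gamma_add_one hx.ne',
    rpow_mul_mul_rpow_of_add_eq_one (Gamma_pos_of_pos hx).le hx.le (by ring)] at hoelder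

lemma mul_Gamma_le_Gamma_add_mul_rpow {x a : ℝ} (hx : 0 < x) (ha₀ : 0 < a) (ha₁ : a < 1) :
    x * Gamma x ≤ Gamma (x + a) * (x + a) ^ (1 - a) := by
  have hxa : 0 < x + a := by linarith
  have hoelder := Gamma_mul_add_mul_le_rpow_Gamma_mul_rpow_Gamma hxa (by linarith : 0 < x + a + 1)
    ha₀ (by linarith : 0 < 1 - a) (by ring)
  rwa [show a * (x + a) + (1 - a) * (x + a + 1) = x + 1 by ring, Gamma_add_one hx.ne',
    Gamma_add_one hxa.ne',
    rpow_mul_mul_rpow_of_add_eq_one (Gamma_pos_of_pos hxa).le hxa.le (by ring)] at hoelder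

lemma isEquivalent_add_const_atTop (a : ℝ) : (fun x : ℝ => x + a) ~[atTop] id :=
  IsEquivalent.refl.add_const_of_norm_tendsto_atTop tendsto_norm_atTop_atTop

lemma isEquivalent_Gamma_add_of_pos_of_lt_one {a : ℝ} (ha₀ : 0 < a) (ha₁ : a < 1) :
    (fun x => Gamma (x + a)) ~[atTop] fun x => Gamma x * x ^ a := by
  refine isEquivalent_of_tendsto_one ?_
  have hlower : Tendsto (fun x : ℝ => (x / (x + a)) ^ (1 - a)) atTop (𝓝 1) := by
    have hdiv := ((isEquivalent_iff_tendsto_one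
      (eventually_ne_atTop (-a) |>.mono fun x hx => by
        simpa [add_eq_zero_iff_eq_neg] using hx)).1 (isEquivalent_add_const_atTop a).symm)
    have hrpow : Tendsto (fun y : ℝ => y ^ (1 - a)) (𝓝 1) (𝓝 1) := by
      simpa using (continuousAt_rpow_const 1 (1 - a) (Or.inl one_ne_zero)).tendsto
    exact hrpow.comp hdiv
  refine tendsto_of_tendsto_of_tendsto_of_le_of_le' hlower tendsto_const_nhds ?_ ?_
  · filter_upwards [eventually_gt_atTop 0] with x hx
    have hxa : 0 < x + a := by linarith
    rw [Pi.div_apply, div_rpow hx.le hxa.le, div_le_div_iff₀ (by positivity)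
      (mul_pos (Gamma_pos_of_pos hx) (by positivity))]
    calc x ^ (1 - a) * (Gamma x * x ^ a) = x * Gamma x := by
          rw [mul_left_comm, ← rpow_add hx, sub_add_cancel, rpow_one, mul_comm]
      _ ≤ Gamma (x + a) * (x + a) ^ (1 - a) := mul_Gamma_le_Gamma_add_mul_rpow hx ha₀ ha₁
  · filter_upwards [eventually_gt_atTop 0] with x hx
    rw [Pi.div_apply, div_le_one (mul_pos (Gamma_pos_of_pos hx) (by positivity))]
    exact Gamma_add_le_Gamma_mul_rpow hx ha₀ ha₁

lemma isEquivalent_Gamma_add_add_one_iff (a : ℝ) :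
    ((fun x => Gamma (x + (a + 1))) ~[atTop] fun x => Gamma x * x ^ (a + 1)) ↔
      (fun x => Gamma (x + a)) ~[atTop] fun x => Gamma x * x ^ a := by
  have hpos : ∀ᶠ x : ℝ in atTop, 0 < x ∧ 0 < x + a :=
    (eventually_gt_atTop 0).and (eventually_gt_atTop (-a) |>.mono fun x hx => by linarith)
  have hGamma : (fun x => Gamma (x + (a + 1))) =ᶠ[atTop] fun x => (x + a) * Gamma (x + a) := by
    filter_upwards [hpos] with x hx
    rw [← add_assoc, Gamma_add_one hx.2.ne']
  have hrpow : (fun x : ℝ => Gamma x * x ^ (a + 1)) =ᶠ[atTop] fun x => x * (Gamma x * x ^ a) := by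
    filter_upwards [hpos] with x hx
    rw [rpow_add_one hx.1.ne']
    ring
  constructor
  · intro h
    have hdiv := (hGamma.symm.trans_isEquivalent h).div (isEquivalent_add_const_atTop a)
    refine (hdiv.trans_eventuallyEq ?_).congr_left ?_
    · filter_upwards [hrpow, hpos] with x hx hx'
      simp only [Pi.div_apply, id, hx, mul_div_cancel_left₀ _ hx'.1.ne']
    · filter_upwards [hpos] with x hx
      simp only [Pi.div_apply, mul_div_cancel_left₀ _ hx.2.ne']
  · intro h
    exact hGamma.trans_isEquivalent
      (((isEquivalent_add_const_atTop a).mul h).trans_eventuallyEq hrpow.symm)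

lemma isEquivalent_Gamma_add_intCast_iff (a : ℝ) (k : ℤ) :
    ((fun x => Gamma (x + (a + k))) ~[atTop] fun x => Gamma x * x ^ (a + k)) ↔
      (fun x => Gamma (x + a)) ~[atTop] fun x => Gamma x * x ^ a := by
  induction k using Int.induction_on with
  | zero => simp
  | succ k ih =>
    rw [show a + ((k + 1 : ℤ) : ℝ) = a + k + 1 by push_cast; ring]
    exact (isEquivalent_Gamma_add_add_one_iff _).trans ih
  | pred k ih =>
    rw [show a + ((-k : ℤ) : ℝ) = a + ((-k - 1 : ℤ) : ℝ) + 1 by push_cast; ring] at ih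
    exact (isEquivalent_Gamma_add_add_one_iff _).symm.trans ih

theorem isEquivalent_Gamma_add (a : ℝ) :
    (fun x => Gamma (x + a)) ~[atTop] fun x => Gamma x * x ^ a := by
  rw [← Int.fract_add_floor a, isEquivalent_Gamma_add_intCast_iff]
  rcases (Int.fract_nonneg a).eq_or_lt with hfract | hfract
  · simp only [← hfract, add_zero, rpow_zero, mul_one]
    exact IsEquivalent.refl
  · exact isEquivalent_Gamma_add_of_pos_of_lt_one hfract (Int.fract_lt_one a)

theorem isEquivalent_Gamma_add_div_Gamma_add (a b : ℝ) :
    (fun x => Gamma (x + a) / Gamma (x + b)) ~[atTop] fun x => x ^ (a - b) := by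
  refine ((isEquivalent_Gamma_add a).div (isEquivalent_Gamma_add b)).trans_eventuallyEq ?_
  filter_upwards [eventually_gt_atTop 0] with x hx
  rw [Pi.div_apply, rpow_sub hx, mul_div_mul_left _ _ (Gamma_pos_of_pos hx).ne']

end Real

/-- `Γ(n+a)/Γ(n+b) ~ n^{a-b}` as `n → ∞`. -/
theorem stmt_4 (a b : ℝ) :
    Filter.Tendsto
      (fun n : ℕ => (Real.Gamma ((n : ℝ) + a) / Real.Gamma ((n : ℝ) + b)) / (n : ℝ) ^ (a - b))
      Filter.atTop (nhds 1) := by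
  have hequiv := (Real.isEquivalent_Gamma_add_div_Gamma_add a b).comp_tendsto
    tendsto_natCast_atTop_atTop
  refine (isEquivalent_iff_tendsto_one ?_).1 hequiv
  filter_upwards [eventually_gt_atTop 0] with n hn
  exact (rpow_pos_of_pos (Nat.cast_pos.2 hn) _).ne'
end

section
/- Let α₁ > 0, β > 0, β₁ > 0 and 0 < r < 1. Define x_{1,0} = (1−r)/(α₁ + β + 1) and x_{k,0} = ((k−1)α₁ + β₁)/(kα₁ + β + 1) · x_{k−1,0} for k > 1. Then x_{k,0} ~ C₀ · k^{−(1 + (β₂+1)/α₁)} as k → ∞, where β₂ = β − β₁ and C₀ = ((1−r)/α₁) · Γ(1 + (β+1)/α₁)/Γ(1 + β₁/α₁). -/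
/-!
With `a = β₁/α₁` and `b = 1 + (β+1)/α₁` the recursion reads `x (k+1) = (k+a)/(k+b) · x k`,
which telescopes to `x k = C · Γ(k+a)/Γ(k+b)`. Wendel's limit `Γ(n+s) ~ Γ(n) n^s`, a consequence
of Euler's limit formula for `Γ`, then gives `Γ(k+a)/Γ(k+b) ~ k^(a-b)`.
-/

open Real Filter Topology

namespace Real

theorem Gamma_add_nat_eq_mul_prod {s : ℝ} (hs : 0 < s) (n : ℕ) :
    Gamma (s + n) = Gamma s * ∏ j ∈ Finset.range n, (s + j) := by
  induction n with
  | zero => simp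
  | succ n ih =>
    rw [Nat.cast_succ, ← add_assoc, Gamma_add_one (by positivity), ih, Finset.prod_range_succ]
    ring

theorem tendsto_Gamma_nat_add_div_mul_rpow {s : ℝ} (hs : 0 < s) :
    Tendsto (fun n : ℕ => Gamma (n + s) / (Gamma n * (n : ℝ) ^ s)) atTop (𝓝 1) := by
  have hΓs : Gamma s ≠ 0 := (Gamma_pos_of_pos hs).ne'
  have hlim := ((tendsto_const_nhds (x := Gamma s)).div (GammaSeq_tendsto_Gamma s) hΓs).mul
    (tendsto_natCast_div_add_atTop s)
  rw [div_self hΓs, one_mul] at hlim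
  refine hlim.congr' ?_
  filter_upwards [eventually_gt_atTop 0] with n hn
  have hn' : (0 : ℝ) < n := Nat.cast_pos.mpr hn
  have hprod : ∏ j ∈ Finset.range (n + 1), (s + j) = (n + s) * Gamma (n + s) / Gamma s := by
    rw [eq_div_iff hΓs, mul_comm, ← Gamma_add_nat_eq_mul_prod hs, Nat.cast_succ, ← add_assoc,
      Gamma_add_one (by positivity), add_comm s]
  have hfact : (n.factorial : ℝ) = n * Gamma n := by
    rw [← Gamma_nat_eq_factorial, Gamma_add_one hn'.ne']
  have := Gamma_pos_of_pos hn'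
  have := Gamma_pos_of_pos (add_pos hn' hs)
  rw [Pi.div_apply, GammaSeq, hprod, hfact]
  field_simp

theorem tendsto_Gamma_nat_add_div_Gamma_nat_add_mul_rpow {a b : ℝ} (ha : 0 < a) (hb : 0 < b) :
    Tendsto (fun n : ℕ => Gamma (n + a) / Gamma (n + b) * (n : ℝ) ^ (b - a)) atTop (𝓝 1) := by
  have hlim := (tendsto_Gamma_nat_add_div_mul_rpow ha).div
    (tendsto_Gamma_nat_add_div_mul_rpow hb) one_ne_zero
  rw [div_one] at hlim
  refine hlim.congr' ?_
  filter_upwards [eventually_gt_atTop 0] with n hn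
  have hn' : (0 : ℝ) < n := Nat.cast_pos.mpr hn
  have := Gamma_pos_of_pos hn'
  have := Gamma_pos_of_pos (add_pos hn' hb)
  have := rpow_pos_of_pos hn' a
  rw [Pi.div_apply, rpow_sub hn']
  field_simp

end Real

theorem eq_mul_Gamma_div_Gamma_of_succ_eq {a b : ℝ} (ha : 0 < a) (hb : 0 < b) {y : ℕ → ℝ}
    (hy : ∀ k ≥ 1, y (k + 1) = (k + a) / (k + b) * y k) :
    ∀ k ≥ 1, y k = y 1 * Gamma (1 + b) / Gamma (1 + a) * (Gamma (k + a) / Gamma (k + b)) := by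
  have := Gamma_pos_of_pos (add_pos one_pos ha)
  have := Gamma_pos_of_pos (add_pos one_pos hb)
  intro k hk
  induction k, hk using Nat.le_induction with
  | base => simp only [Nat.cast_one]; field_simp
  | succ k hk ih =>
    have hk' : (0 : ℝ) < k := Nat.cast_pos.mpr hk
    have := Gamma_pos_of_pos (add_pos hk' ha)
    have := Gamma_pos_of_pos (add_pos hk' hb)
    rw [hy k hk, ih, Nat.cast_succ, add_right_comm _ 1 a, add_right_comm _ 1 b,
      Gamma_add_one (by positivity), Gamma_add_one (by positivity)]
    field_simp

theorem tendsto_mul_rpow_of_succ_eq {a b : ℝ} (ha : 0 < a) (hb : 0 < b) {y : ℕ → ℝ}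
    (hy : ∀ k ≥ 1, y (k + 1) = (k + a) / (k + b) * y k) :
    Tendsto (fun k : ℕ => y k * (k : ℝ) ^ (b - a)) atTop
      (𝓝 (y 1 * Gamma (1 + b) / Gamma (1 + a))) := by
  have hlim := (tendsto_Gamma_nat_add_div_Gamma_nat_add_mul_rpow ha hb).const_mul
    (y 1 * Gamma (1 + b) / Gamma (1 + a))
  rw [mul_one] at hlim
  refine hlim.congr' ?_
  filter_upwards [eventually_ge_atTop 1] with k hk
  rw [eq_mul_Gamma_div_Gamma_of_succ_eq ha hb hy k hk]
  ring

theorem stmt_7_general (α₁ β β₁ r : ℝ) (hα₁ : 0 < α₁) (hβ : 0 < β) (hβ₁ : 0 < β₁)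
    (x : ℕ → ℝ) (hx1 : x 1 = (1 - r) / (α₁ + β + 1))
    (hrec : ∀ k : ℕ, 1 < k →
      x k = (((k : ℝ) - 1) * α₁ + β₁) / ((k : ℝ) * α₁ + β + 1) * x (k - 1)) :
    Filter.Tendsto (fun k : ℕ => x k * (k : ℝ) ^ (1 + ((β - β₁) + 1) / α₁)) Filter.atTop
      (nhds (((1 - r) / α₁) * (Real.Gamma (1 + (β + 1) / α₁) / Real.Gamma (1 + β₁ / α₁)))) := by
  have hrec' : ∀ k ≥ 1, x (k + 1) = (k + β₁ / α₁) / (k + (1 + (β + 1) / α₁)) * x k := by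
    intro k hk
    rw [hrec (k + 1) (by omega), Nat.add_sub_cancel, Nat.cast_succ]
    congr 1
    field_simp
    ring
  have hlim := tendsto_mul_rpow_of_succ_eq (by positivity) (by positivity) hrec'
  have hexp : 1 + (β + 1) / α₁ - β₁ / α₁ = 1 + ((β - β₁) + 1) / α₁ := by
    field_simp
    ring
  have hconst :
      x 1 * Gamma (1 + (1 + (β + 1) / α₁)) = (1 - r) / α₁ * Gamma (1 + (β + 1) / α₁) := by
    rw [add_comm 1 (1 + _), Gamma_add_one (by positivity), hx1]
    field_simp
    ring
  rwa [hexp, hconst, mul_div_assoc] at hlim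

/-- Scale-free asymptotics for the boundary sequence `x_{k,0}`:
`x_{k,0} ~ C₀ · k^{-(1+(β₂+1)/α₁)}` where `β₂ = β - β₁`. -/
theorem stmt_7 (α₁ β β₁ r : ℝ) (hα₁ : 0 < α₁) (hβ : 0 < β) (hβ₁ : 0 < β₁)
    (hβ₂pos : 0 < β - β₁) (hr0 : 0 < r) (hr1 : r < 1)
    (x : ℕ → ℝ) (hx1 : x 1 = (1 - r) / (α₁ + β + 1))
    (hrec : ∀ k : ℕ, 1 < k →
      x k = (((k : ℝ) - 1) * α₁ + β₁) / ((k : ℝ) * α₁ + β + 1) * x (k - 1)) :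
    Filter.Tendsto (fun k : ℕ => x k * (k : ℝ) ^ (1 + ((β - β₁) + 1) / α₁)) Filter.atTop
      (nhds (((1 - r) / α₁) * (Real.Gamma (1 + (β + 1) / α₁) / Real.Gamma (1 + β₁ / α₁)))) :=
  stmt_7_general α₁ β β₁ r hα₁ hβ hβ₁ x hx1 hrec
end

section
/- Let α₂ > 0 and let c, d be reals with c > d > 0 (so that the Gamma arguments below are positive). For positive integers l, define b_i^{(l)} = K · [Γ(l+d)/Γ(l+1+c)] · [Γ(i+c)/Γ(i+d)] for 1 ≤ i ≤ l, where K > 0 is a constant, and let y_i = Γ(i+d)/Γ(i+e) for a real e with e > d and e < c + 1. Then ∑_{i=1}^{l} b_i^{(l)} y_i ~ (K/(c−e+1)) · Γ(l+d)/Γ(l+e) as l → ∞. -/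
/-!
After cancelling `Γ(i+d)`, the sum is `∑ Γ(i+c)/Γ(i+e)`, which telescopes: by `Γ(x+1) = xΓ(x)`,
`(c-e+1) Γ(i+c)/Γ(i+e)` is the difference of consecutive values of `Γ(i+1+c)/Γ(i+e)`. Hence the
ratio in question equals `1 - (Γ(1+c)/Γ(e)) · Γ(l+e)/Γ(l+1+c)`, and the last quotient tends to `0`
because `e < c + 1`; this follows from log-convexity of `Γ`, which gives `Γ(x+s) ≤ x^s Γ(x)`.
-/

open Real Filter Finset

namespace Real

theorem Gamma_add_le_rpow_mul_Gamma {x s : ℝ} (hx : 0 < x) (hs₀ : 0 < s) (hs₁ : s < 1) :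
    Gamma (x + s) ≤ x ^ s * Gamma x := by
  have hΓ := Gamma_pos_of_pos hx
  calc Gamma (x + s) = Gamma ((1 - s) * x + s * (x + 1)) := by congr 1; ring
    _ ≤ Gamma x ^ (1 - s) * Gamma (x + 1) ^ s :=
        Gamma_mul_add_mul_le_rpow_Gamma_mul_rpow_Gamma hx (by linarith) (by linarith) hs₀
          (by ring)
    _ = x ^ s * (Gamma x ^ (1 - s) * Gamma x ^ s) := by
        rw [Gamma_add_one hx.ne', mul_rpow hx.le hΓ.le]; ring
    _ = x ^ s * Gamma x := by rw [← rpow_add hΓ, sub_add_cancel, rpow_one]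

theorem tendsto_Gamma_add_div_Gamma_add_atTop {a b : ℝ} (hab : a < b) :
    Tendsto (fun x => Gamma (x + a) / Gamma (x + b)) atTop (nhds 0) := by
  -- Compare `Γ(x + a)` with `Γ(y + s)` for `y = x + b - 1` and an exponent `s ∈ (0, 1)` with
  -- `a ≤ b - 1 + s`; then `Γ(x + b) = y Γ(y)` and the ratio is at most `y ^ (s - 1)`.
  set s := max (a - b + 1) (1 / 2)
  have hs₀ : 0 < s := lt_max_of_lt_right (by norm_num)
  have hs₁ : s < 1 := max_lt (by linarith) (by norm_num)
  have has : a ≤ b - 1 + s := by linarith [le_max_left (a - b + 1) (1 / 2)]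
  have hlim : Tendsto (fun x => (x + (b - 1)) ^ (-(1 - s))) atTop (nhds 0) :=
    (tendsto_rpow_neg_atTop (by linarith)).comp (tendsto_atTop_add_const_right _ _ tendsto_id)
  refine squeeze_zero' ?_ ?_ hlim
  · filter_upwards [eventually_gt_atTop (-a)] with x hx
    exact div_nonneg (Gamma_pos_of_pos (by linarith)).le (Gamma_pos_of_pos (by linarith)).le
  · filter_upwards [eventually_ge_atTop (2 - a)] with x hx
    set y := x + (b - 1)
    have hy : 0 < y := by linarith
    have hΓy := Gamma_pos_of_pos hy
    have hmono : Gamma (x + a) ≤ Gamma (y + s) :=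
      Gamma_strictMonoOn_Ici.monotoneOn (by simp only [Set.mem_Ici]; linarith)
        (by simp only [Set.mem_Ici]; linarith) (by linarith)
    have hrec : Gamma (x + b) = y * Gamma y := by
      rw [← Gamma_add_one hy.ne']; congr 1; ring
    calc Gamma (x + a) / Gamma (x + b) ≤ y ^ s * Gamma y / (y * Gamma y) := by
          rw [hrec]
          gcongr
          exact hmono.trans (Gamma_add_le_rpow_mul_Gamma hy hs₀ hs₁)
      _ = y ^ (-(1 - s)) := by
          rw [neg_sub, rpow_sub_one hy.ne']; field_simp

theorem tendsto_Gamma_natCast_add_div_Gamma_natCast_add {a b : ℝ} (hab : a < b) :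
    Tendsto (fun n : ℕ => Gamma (n + a) / Gamma (n + b)) atTop (nhds 0) :=
  (tendsto_Gamma_add_div_Gamma_add_atTop hab).comp tendsto_natCast_atTop_atTop

theorem sub_mul_sum_range_Gamma_add_div_Gamma_add_add_one {a b : ℝ} (ha : 0 < a) (hb : 0 < b)
    (n : ℕ) :
    (a - b) * ∑ i ∈ range n, Gamma (i + a) / Gamma (i + b + 1) =
      Gamma (n + a) / Gamma (n + b) - Gamma a / Gamma b := by
  have hstep (i : ℕ) : (a - b) * (Gamma (i + a) / Gamma (i + b + 1)) =
      Gamma ((i + 1 : ℕ) + a) / Gamma ((i + 1 : ℕ) + b) - Gamma (i + a) / Gamma (i + b) := by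
    have hia : (0 : ℝ) < i + a := by positivity
    have hib : (0 : ℝ) < i + b := by positivity
    have := (Gamma_pos_of_pos hib).ne'
    push_cast
    rw [add_right_comm _ 1 a, add_right_comm _ 1 b, Gamma_add_one hia.ne',
      Gamma_add_one hib.ne']
    field_simp
    ring
  simpa [mul_sum, hstep] using sum_range_sub (fun i : ℕ => Gamma (i + a) / Gamma (i + b)) n

end Real

theorem sub_add_one_mul_sum_Icc_Gamma_add_div_Gamma_add {c e : ℝ} (hc : 0 < c) (he : 0 < e)
    (l : ℕ) :
    (c - e + 1) * ∑ i ∈ Icc 1 l, Gamma (i + c) / Gamma (i + e) =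
      Gamma (l + 1 + c) / Gamma (l + e) - Gamma (1 + c) / Gamma e := by
  have := sub_mul_sum_range_Gamma_add_div_Gamma_add_add_one (by positivity : 0 < 1 + c) he l
  have hshift : ∑ i ∈ Icc 1 l, Gamma (i + c) / Gamma (i + e) =
      ∑ i ∈ range l, Gamma ((i + 1 : ℕ) + c) / Gamma ((i + 1 : ℕ) + e) := by
    rw [range_eq_Ico, sum_Ico_add' (fun i : ℕ => Gamma (i + c) / Gamma (i + e)) 0 l 1]; rfl
  rw [hshift]
  convert this using 3 <;> push_cast <;> ring_nf

theorem sum_Icc_mul_Gamma_div_eq_one_sub {c d e K : ℝ} (hc : 0 < c) (hd : 0 < d) (he : 0 < e)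
    (hK : K ≠ 0) (hce : c - e + 1 ≠ 0) (l : ℕ) :
    (∑ i ∈ Icc 1 l, (K * (Gamma (l + d) / Gamma (l + 1 + c)) * (Gamma (i + c) / Gamma (i + d)))
        * (Gamma (i + d) / Gamma (i + e))) / (K / (c - e + 1) * (Gamma (l + d) / Gamma (l + e)))
      = 1 - Gamma (1 + c) / Gamma e * (Gamma (l + e) / Gamma (l + (1 + c))) := by
  have hcancel : ∑ i ∈ Icc 1 l,
      (K * (Gamma (l + d) / Gamma (l + 1 + c)) * (Gamma (i + c) / Gamma (i + d)))
        * (Gamma (i + d) / Gamma (i + e)) =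
      K * (Gamma (l + d) / Gamma (l + 1 + c)) * ∑ i ∈ Icc 1 l, Gamma (i + c) / Gamma (i + e) := by
    rw [mul_sum]
    refine sum_congr rfl fun i _ => ?_
    have := (Gamma_pos_of_pos (by positivity : (0 : ℝ) < i + d)).ne'
    field_simp
  have hsum : ∑ i ∈ Icc 1 l, Gamma (i + c) / Gamma (i + e) =
      (Gamma (l + 1 + c) / Gamma (l + e) - Gamma (1 + c) / Gamma e) / (c - e + 1) := by
    rw [← sub_add_one_mul_sum_Icc_Gamma_add_div_Gamma_add hc he l]; field_simp
  have := (Gamma_pos_of_pos (by positivity : (0 : ℝ) < l + d)).ne'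
  have := (Gamma_pos_of_pos (by positivity : (0 : ℝ) < l + e)).ne'
  have := (Gamma_pos_of_pos (by positivity : (0 : ℝ) < l + 1 + c)).ne'
  have := (Gamma_pos_of_pos he).ne'
  rw [hcancel, hsum, ← add_assoc]
  field_simp

/-- The key summation step: with `b_i^{(l)} = K·[Γ(l+d)/Γ(l+1+c)]·[Γ(i+c)/Γ(i+d)]`
and `y_i = Γ(i+d)/Γ(i+e)`, one has
`∑_{i=1}^{l} b_i^{(l)} y_i ~ (K/(c−e+1))·Γ(l+d)/Γ(l+e)` as `l → ∞`. -/
theorem stmt_9 (c d e K : ℝ) (hd : 0 < d) (hcd : d < c) (hK : 0 < K)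
    (hed : d < e) (hec : e < c + 1) :
    Filter.Tendsto
      (fun l : ℕ =>
        (∑ i ∈ Finset.Icc 1 l,
            (K * (Real.Gamma ((l : ℝ) + d) / Real.Gamma ((l : ℝ) + 1 + c))
              * (Real.Gamma ((i : ℝ) + c) / Real.Gamma ((i : ℝ) + d)))
            * (Real.Gamma ((i : ℝ) + d) / Real.Gamma ((i : ℝ) + e)))
          / ((K / (c - e + 1)) * (Real.Gamma ((l : ℝ) + d) / Real.Gamma ((l : ℝ) + e))))
      Filter.atTop (nhds 1) := by
  simp_rw [sum_Icc_mul_Gamma_div_eq_one_sub (hd.trans hcd) hd (hd.trans hed) hK.ne'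
    (by linarith : c - e + 1 ≠ 0)]
  simpa using ((tendsto_Gamma_natCast_add_div_Gamma_natCast_add
    (by linarith : e < 1 + c)).const_mul (Gamma (1 + c) / Gamma e)).const_sub 1
end

section
/- Let (c_n) be defined by c_n = ∏_{i=1}^{n} (1 − γ/i − β/(i + ε_i))^{-1}, where γ, β > 0 are constants and ε_i = o(i^{1/2+ε}) is a real sequence with i + ε_i > 0 and each factor in (0,1). Then there exists a positive constant a such that c_n ~ a·n^{γ+β} as n → ∞, i.e., lim_{n→∞} c_n / n^{γ+β} exists and is a positive real number. -/
open Real Filter Finset Asymptotics Topology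

/-!
Write `q_i = 1 - x_i` with `x_i = γ/i + β/(i + ε_i)`. Taking logarithms,
`log (c_n / n^(γ+β)) = -∑_{i ≤ n} (log q_i + (γ+β)/i) + (γ+β) (H_n - log n)`,
and `H_n - log n` tends to the Euler–Mascheroni constant. The series converges because
`log q_i + (γ+β)/i = (log (1 - x_i) + x_i) + (β/i - β/(i + ε_i))`: since `ε_i = o(i)` we have
`x_i = O(1/i)`, so the first bracket is `O(x_i²) = O(i⁻²)`, and the second is
`β ε_i / (i (i + ε_i)) = O(i^(p-2))` as soon as `ε_i = O(i^p)` for some `p < 1`.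
-/

theorem Real.log_one_sub_add_self_isBigO :
    (fun x : ℝ => log (1 - x) + x) =O[𝓝 0] fun x => x ^ 2 := by
  refine IsBigO.of_bound 2 ?_
  filter_upwards [Metric.ball_mem_nhds (0 : ℝ) one_half_pos] with x hx
  rw [Metric.mem_ball, dist_zero_right, norm_eq_abs] at hx
  have hlog := abs_log_sub_add_sum_range_le (hx.trans one_half_lt_one) 1
  simp only [range_one, sum_singleton, zero_add, pow_one, Nat.cast_zero, div_one] at hlog
  rw [norm_eq_abs, norm_eq_abs, abs_pow, add_comm]
  calc |x + log (1 - x)| ≤ |x| ^ 2 / (1 - |x|) := hlog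
    _ ≤ |x| ^ 2 / (1 / 2) := by gcongr; linarith
    _ = 2 * |x| ^ 2 := by ring

theorem natCast_rpow_isLittleO_natCast {p : ℝ} (hp : p < 1) :
    (fun i : ℕ => (i : ℝ) ^ p) =o[atTop] fun i : ℕ => (i : ℝ) := by
  refine (isLittleO_iff_tendsto' ?_).mpr ?_
  · filter_upwards [eventually_ne_atTop 0] with i hi h
    exact absurd (Nat.cast_eq_zero.mp h) hi
  · refine ((tendsto_rpow_neg_atTop (sub_pos.mpr hp)).comp tendsto_natCast_atTop_atTop).congr' ?_
    filter_upwards [eventually_ne_atTop 0] with i hi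
    have hi : (0 : ℝ) < i := by positivity
    rw [Function.comp_apply, neg_sub, rpow_sub hi, rpow_one]

theorem isEquivalent_natCast_add {ε : ℕ → ℝ} (hε : ε =o[atTop] fun i : ℕ => (i : ℝ)) :
    (fun i : ℕ => (i : ℝ) + ε i) ~[atTop] fun i => (i : ℝ) := by
  have hdiff : ((fun i : ℕ => (i : ℝ) + ε i) - fun i : ℕ => (i : ℝ)) = ε := by
    funext i
    simp
  rwa [IsEquivalent, hdiff]

theorem summable_div_sub_div_add (β : ℝ) {ε : ℕ → ℝ} {p : ℝ} (hp : p < 1)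
    (hε : ε =O[atTop] fun i : ℕ => (i : ℝ) ^ p) :
    Summable fun i : ℕ => β / i - β / (i + ε i) := by
  have hequiv := isEquivalent_natCast_add (hε.trans_isLittleO (natCast_rpow_isLittleO_natCast hp))
  have hpos : ∀ᶠ i : ℕ in atTop, 0 < (i : ℝ) + ε i :=
    (hequiv.symm.tendsto_atTop tendsto_natCast_atTop_atTop).eventually_gt_atTop 0
  have hinv : (fun i : ℕ => ((i : ℝ) + ε i)⁻¹) =O[atTop] fun i => (i : ℝ)⁻¹ :=
    hequiv.inv.isBigO
  have hbound : (fun i : ℕ => β / i - β / (i + ε i)) =O[atTop]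
      fun i : ℕ => (i : ℝ) ^ (p - 2) := by
    refine (((hε.mul (isBigO_refl (fun i : ℕ => (i : ℝ)⁻¹) atTop)).mul hinv).const_mul_left
      β).congr' ?_ ?_
    · filter_upwards [hpos, eventually_ne_atTop 0] with i hi hi0
      field_simp
      ring
    · filter_upwards [eventually_ne_atTop 0] with i hi
      rw [rpow_sub (by positivity), rpow_two]
      field_simp
  refine summable_of_isBigO' (summable_nat_rpow.mpr (by linarith : p - 2 < -1)) ?_
  rwa [Nat.cofinite_eq_atTop]

theorem summable_log_one_sub_div_sub_div_add_div (γ β : ℝ) {ε : ℕ → ℝ} {p : ℝ} (hp : p < 1)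
    (hε : ε =O[atTop] fun i : ℕ => (i : ℝ) ^ p) :
    Summable fun i : ℕ => log (1 - γ / i - β / (i + ε i)) + (γ + β) / i := by
  have hinv : (fun i : ℕ => ((i : ℝ) + ε i)⁻¹) =O[atTop] fun i => (i : ℝ)⁻¹ :=
    (isEquivalent_natCast_add (hε.trans_isLittleO (natCast_rpow_isLittleO_natCast hp))).inv.isBigO
  set x : ℕ → ℝ := fun i => γ / i + β / (i + ε i)
  have hx : x =O[atTop] fun i => (i : ℝ)⁻¹ := by
    simpa only [x, div_eq_mul_inv] using
      ((isBigO_refl _ _).const_mul_left γ).add (hinv.const_mul_left β)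
  have hx_tendsto : Tendsto x atTop (𝓝 0) :=
    hx.trans_tendsto (tendsto_inv_atTop_zero.comp tendsto_natCast_atTop_atTop)
  have hx_sq : Summable fun i => x i ^ 2 := by
    refine summable_of_isBigO' (Real.summable_one_div_nat_pow.mpr one_lt_two) ?_
    rw [Nat.cofinite_eq_atTop]
    simpa only [one_div, inv_pow] using hx.pow 2
  have hquadratic : Summable fun i => log (1 - x i) + x i := by
    refine summable_of_isBigO' hx_sq ?_
    rw [Nat.cofinite_eq_atTop]
    exact Real.log_one_sub_add_self_isBigO.comp_tendsto hx_tendsto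
  refine (hquadratic.add (summable_div_sub_div_add β hp hε)).congr fun i => ?_
  simp only [x, sub_sub]
  ring

theorem Finset.sum_Icc_one_eq_sum_range {M : Type*} [AddCommMonoid M] (f : ℕ → M) (n : ℕ) :
    ∑ i ∈ Icc 1 n, f i = ∑ i ∈ range n, f (i + 1) := by
  rw [← Finset.Ico_add_one_right_eq_Icc, sum_Ico_eq_sum_range, Nat.add_sub_cancel]
  simp only [add_comm]

theorem exists_pos_tendsto_prod_inv_div_rpow {q : ℕ → ℝ} {s : ℝ} (hq : ∀ i, 1 ≤ i → 0 < q i)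
    (hsum : Summable fun i : ℕ => log (q i) + s / i) :
    ∃ a, 0 < a ∧ Tendsto (fun n : ℕ => (∏ i ∈ Icc 1 n, (q i)⁻¹) / (n : ℝ) ^ s) atTop (𝓝 a) := by
  set f : ℕ → ℝ := fun i => log (q i) + s / i
  have hpartial : Tendsto (fun n => ∑ i ∈ Icc 1 n, f i) atTop (𝓝 (∑' i, f (i + 1))) := by
    simpa only [Finset.sum_Icc_one_eq_sum_range] using
      ((summable_nat_add_iff 1).mpr hsum).hasSum.tendsto_sum_nat
  have hexponent := hpartial.neg.add (tendsto_harmonic_sub_log.const_mul s)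
  refine ⟨exp (-∑' i, f (i + 1) + s * eulerMascheroniConstant), exp_pos _,
    ((continuous_exp.tendsto _).comp hexponent).congr' ?_⟩
  filter_upwards [eventually_ge_atTop 1] with n hn
  have hsplit : ∑ i ∈ Icc 1 n, f i = ∑ i ∈ Icc 1 n, log (q i) + s * harmonic n := by
    simp only [f, sum_add_distrib, harmonic_eq_sum_Icc, div_eq_mul_inv]
    push_cast
    rw [mul_sum]
  have hprod : ∏ i ∈ Icc 1 n, (q i)⁻¹ = exp (-∑ i ∈ Icc 1 n, log (q i)) := by
    rw [← sum_neg_distrib, exp_sum]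
    refine prod_congr rfl fun i hi => ?_
    rw [exp_neg, exp_log (hq i (mem_Icc.mp hi).1)]
  rw [Function.comp_apply, hsplit, hprod, rpow_def_of_pos (by exact_mod_cast hn), ← exp_sub]
  ring_nf

theorem stmt_11_general (γ β : ℝ) (ε : ℕ → ℝ)
    (hfac : ∀ i : ℕ, 1 ≤ i →
      0 < 1 - γ / (i : ℝ) - β / ((i : ℝ) + ε i)
        ∧ 1 - γ / (i : ℝ) - β / ((i : ℝ) + ε i) < 1)
    (hε : ∀ δ : ℝ, 0 < δ →
      ε =o[Filter.atTop] fun i : ℕ => (i : ℝ) ^ ((1 : ℝ) / 2 + δ))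
    (c : ℕ → ℝ)
    (hc : ∀ n : ℕ, c n = ∏ i ∈ Finset.Icc 1 n, (1 - γ / (i : ℝ) - β / ((i : ℝ) + ε i))⁻¹) :
    ∃ a : ℝ, 0 < a ∧
      Filter.Tendsto (fun n : ℕ => c n / (n : ℝ) ^ (γ + β)) Filter.atTop (nhds a) := by
  have hsum := summable_log_one_sub_div_sub_div_add_div γ β
    (by norm_num : (1 : ℝ) / 2 + 1 / 4 < 1) (hε (1 / 4) (by norm_num)).isBigO
  obtain ⟨a, ha, hlim⟩ := exists_pos_tendsto_prod_inv_div_rpow (fun i hi => (hfac i hi).1) hsum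
  exact ⟨a, ha, by simpa only [hc] using hlim⟩

/-- Asymptotics of the normalizing products `c_n = ∏_{i=1}^n (1 − γ/i − β/(i+ε_i))⁻¹`:
there is a positive constant `a` with `c_n ~ a·n^{γ+β}`. -/
theorem stmt_11 (γ β : ℝ) (hγ : 0 < γ) (hβ : 0 < β) (ε : ℕ → ℝ)
    (hεpos : ∀ i : ℕ, 1 ≤ i → 0 < (i : ℝ) + ε i)
    (hfac : ∀ i : ℕ, 1 ≤ i →
      0 < 1 - γ / (i : ℝ) - β / ((i : ℝ) + ε i)
        ∧ 1 - γ / (i : ℝ) - β / ((i : ℝ) + ε i) < 1)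
    (hε : ∀ δ : ℝ, 0 < δ →
      ε =o[Filter.atTop] fun i : ℕ => (i : ℝ) ^ ((1 : ℝ) / 2 + δ))
    (c : ℕ → ℝ)
    (hc : ∀ n : ℕ, c n = ∏ i ∈ Finset.Icc 1 n, (1 - γ / (i : ℝ) - β / ((i : ℝ) + ε i))⁻¹) :
    ∃ a : ℝ, 0 < a ∧
      Filter.Tendsto (fun n : ℕ => c n / (n : ℝ) ^ (γ + β)) Filter.atTop (nhds a) :=
  stmt_11_general γ β ε hfac hε c hc
end
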